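/- For every natural number k ≥ 1 and all natural numbers n, m ≥ 0, the inequality Γ(n + k/2)·Γ(m + k/2)/Γ(n + m + k) ≤ Γ(k/2)²/Γ(k) holds. -/

import Mathlib

/-!
With `B(x, y) = Γ(x) Γ(y) / Γ(x + y)`, the functional equation of `Γ` gives
`B(x + 1, y) = x / (x + y) · B(x, y) ≤ B(x, y)`, so `B` decreases when either argument grows by
an integer. Hence, for `a = k / 2 > 0`,
`B(a + n, a + m) ≤ B(a, a + m) = B(a + m, a) ≤ B(a, a)`, which is the claim.
-/

open Real

noncomputable def realBeta (x y : ℝ) : ℝ :=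
  Gamma x * Gamma y / Gamma (x + y)

lemma realBeta_comm (x y : ℝ) : realBeta x y = realBeta y x := by
  rw [realBeta, realBeta, mul_comm, add_comm]

lemma realBeta_nonneg {x y : ℝ} (hx : 0 < x) (hy : 0 < y) : 0 ≤ realBeta x y := by
  have := Gamma_pos_of_pos hx
  have := Gamma_pos_of_pos hy
  have := Gamma_pos_of_pos (add_pos hx hy)
  unfold realBeta
  positivity

lemma realBeta_add_one {x y : ℝ} (hx : 0 < x) (hy : 0 < y) :
    realBeta (x + 1) y = x / (x + y) * realBeta x y := by
  have hxy : 0 < x + y := add_pos hx hy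
  have hΓ : Gamma (x + y) ≠ 0 := (Gamma_pos_of_pos hxy).ne'
  rw [realBeta, realBeta, Gamma_add_one hx.ne', add_right_comm, Gamma_add_one hxy.ne']
  field_simp

lemma realBeta_add_one_le {x y : ℝ} (hx : 0 < x) (hy : 0 < y) :
    realBeta (x + 1) y ≤ realBeta x y := by
  rw [realBeta_add_one hx hy]
  exact mul_le_of_le_one_left (realBeta_nonneg hx hy)
    ((div_le_one (add_pos hx hy)).2 (le_add_of_nonneg_right hy.le))

lemma realBeta_add_nat_le {x y : ℝ} (hx : 0 < x) (hy : 0 < y) (n : ℕ) :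
    realBeta (x + n) y ≤ realBeta x y := by
  induction n with
  | zero => simp
  | succ n ih =>
    calc realBeta (x + (n + 1 : ℕ)) y = realBeta (x + n + 1) y := by push_cast; ring_nf
      _ ≤ realBeta (x + n) y := realBeta_add_one_le (by positivity) hy
      _ ≤ realBeta x y := ih

theorem gamma_quotient_bound (k n m : ℕ) (hk : 1 ≤ k) :
    Real.Gamma ((n : ℝ) + (k : ℝ) / 2) * Real.Gamma ((m : ℝ) + (k : ℝ) / 2) /
      Real.Gamma ((n : ℝ) + (m : ℝ) + (k : ℝ))
      ≤ Real.Gamma ((k : ℝ) / 2) ^ 2 / Real.Gamma (k : ℝ) := by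
  set a : ℝ := (k : ℝ) / 2 with ha_def
  have ha : 0 < a := by
    have : (1 : ℝ) ≤ k := by exact_mod_cast hk
    linarith
  have hlhs : Gamma (n + a) * Gamma (m + a) / Gamma (n + m + k)
      = realBeta (a + n) (a + m) := by
    rw [realBeta, ha_def]; ring_nf
  have hrhs : Gamma a ^ 2 / Gamma k = realBeta a a := by
    rw [realBeta, ha_def]; ring_nf
  rw [hlhs, hrhs]
  calc realBeta (a + n) (a + m) ≤ realBeta a (a + m) := realBeta_add_nat_le ha (by positivity) n
    _ = realBeta (a + m) a := realBeta_comm _ _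
    _ ≤ realBeta a a := realBeta_add_nat_le ha ha m
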